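/- Let N ≥ 1 and let U be a Haar-random element of U(2^N). Set ρ := U e₁ e₁† U†, where e₁ is the first standard basis vector of ℂ^{2^N}. Then for all multi-indices i, j ∈ {0,1,2,3}^N with i ≠ 0 and j ≠ 0: E[Tr[ρσ_i]] = 0 and E[Tr[ρσ_i]·Tr[ρσ_j]] = δ_{ij}/(2^N + 1), where δ_{ij} is the Kronecker delta. -/

import Mathlib

open MeasureTheory Matrix

/-- The space of `m × n` complex matrices carries the (product) measurable structure. -/
noncomputable instance {m n : Type*} : MeasurableSpace (Matrix m n ℂ) :=
  (inferInstance : MeasurableSpace (m → n → ℂ))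

/-- The single-qubit Pauli matrices `σ₀ = I, σ₁ = X, σ₂ = Y, σ₃ = Z`. -/
noncomputable def pauli : Fin 4 → Matrix (Fin 2) (Fin 2) ℂ :=
  ![1, !![0, 1; 1, 0], !![0, -Complex.I; Complex.I, 0], !![1, 0; 0, -1]]

/-- The `N`-qubit Pauli string `σ_i = σ_{i₁} ⊗ ⋯ ⊗ σ_{i_N}`, as a matrix on `ℂ^{2^N}`
(whose index set is realized as `Fin N → Fin 2`). -/
noncomputable def pauliString (N : ℕ) (i : Fin N → Fin 4) :
    Matrix (Fin N → Fin 2) (Fin N → Fin 2) ℂ :=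
  Matrix.of fun v w => ∏ n : Fin N, pauli (i n) (v n) (w n)

/-- The first standard basis vector of `ℂ^{2^N}` (realized as the indicator of the
all-zeros index in `Fin N → Fin 2`). -/
def qubitE1 (N : ℕ) : (Fin N → Fin 2) → ℂ := fun v => if v = fun _ => 0 then 1 else 0

/-- The pure state `ρ = U e₁ e₁† U†`. -/
noncomputable def haarPureState (N : ℕ)
    (U : Matrix.unitaryGroup (Fin N → Fin 2) ℂ) :
    Matrix (Fin N → Fin 2) (Fin N → Fin 2) ℂ :=
  (U : Matrix (Fin N → Fin 2) (Fin N → Fin 2) ℂ) *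
    Matrix.vecMulVec (qubitE1 N) (star (qubitE1 N)) *
    (U : Matrix (Fin N → Fin 2) (Fin N → Fin 2) ℂ)ᴴ

/-!
For a Haar unitary `U` the column `ψ = U e_c` has the same law as `V ψ` for every unitary `V`.
Diagonal phases kill every moment `E[ψ_v ψ̄_w ψ_x ψ̄_y]` whose indices are not paired
(`{v, x} ≠ {w, y}`), permutations make the paired ones depend only on the pattern, and a
single real reflection with entries `3/5, -4/5` shows `E|ψ_v|⁴ = 2 E|ψ_v|²|ψ_x|²`. With
`‖ψ‖ = 1` this gives `E[ψ_v ψ̄_w] = δ_vw / d` and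
`E[ψ_v ψ̄_w ψ_x ψ̄_y] = (δ_vw δ_xy + δ_vy δ_xw) / (d (d + 1))`, hence
`E Tr(ρA) = Tr A / d` and `E[Tr(ρA) Tr(ρB)] = (Tr A Tr B + Tr(AB)) / (d (d + 1))`.
Pauli strings satisfy `Tr σ_i = 0` for `i ≠ 0` and `Tr(σ_i σ_j) = 2^N δ_ij`.
-/

open ComplexConjugate

instance {m n : Type*} [Countable m] [Countable n] : BorelSpace (Matrix m n ℂ) := Pi.borelSpace

instance {ι : Type*} [Fintype ι] [DecidableEq ι] : CompactSpace (unitaryGroup ι ℂ) :=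
  isCompact_iff_compactSpace.mp <|
    IsCompact.of_isClosed_subset
      (s := Set.univ.pi fun _ => Set.univ.pi fun _ => Metric.closedBall 0 1)
      (isCompact_univ_pi fun _ => isCompact_univ_pi fun _ => isCompact_closedBall (0 : ℂ) 1)
      (isClosed_unitary (R := Matrix ι ι ℂ)) fun _ hU => by simpa using entry_norm_bound_of_unitary hU

namespace Matrix

section Unitary

variable {ι : Type*} [Fintype ι]

lemma trace_vecMulVec_star_mul (ψ : ι → ℂ) (A : Matrix ι ι ℂ) :
    trace (vecMulVec ψ (star ψ) * A) = ∑ v, ∑ w, A w v * (ψ v * conj (ψ w)) := by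
  rw [vecMulVec_mul, trace_vecMulVec]
  simp only [dotProduct, vecMul, Finset.mul_sum, Pi.star_apply, RCLike.star_def]
  exact Finset.sum_congr rfl fun _ _ => Finset.sum_congr rfl fun _ _ => by ring

variable [DecidableEq ι]

lemma diagonal_mem_unitaryGroup {θ : ι → ℂ} (hθ : ∀ p, θ p * conj (θ p) = 1) :
    diagonal θ ∈ unitaryGroup ι ℂ := by
  rw [mem_unitaryGroup_iff, star_eq_conjTranspose, diagonal_conjTranspose, diagonal_mul_diagonal]
  exact (congrArg diagonal (funext hθ)).trans diagonal_one

lemma permMatrix_mem_unitaryGroup (σ : Equiv.Perm ι) : σ.permMatrix ℂ ∈ unitaryGroup ι ℂ := by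
  rw [mem_unitaryGroup_iff, star_eq_conjTranspose, conjTranspose_permMatrix, ← permMatrix_mul,
    inv_mul_cancel, permMatrix_one]

/-- For `u = 0` this is the identity, since `2 / 0 = 0`. -/
noncomputable def householder (u : ι → ℂ) : Matrix ι ι ℂ :=
  1 - (2 / (star u ⬝ᵥ u)) • vecMulVec u (star u)

lemma householder_mem_unitaryGroup (u : ι → ℂ) : householder u ∈ unitaryGroup ι ℂ := by
  set s : ℂ := 2 / (star u ⬝ᵥ u)
  have hs : star s = s := by simp only [s, star_div₀, star_ofNat, ← star_dotProduct]
  have hss : s * s * (star u ⬝ᵥ u) = 2 * s := by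
    by_cases hu : star u ⬝ᵥ u = 0
    · simp [s, hu]
    · simp only [s]
      field_simp
  rw [mem_unitaryGroup_iff, star_eq_conjTranspose, householder, conjTranspose_sub,
    conjTranspose_one, conjTranspose_smul, conjTranspose_vecMulVec, star_star, hs]
  simp only [sub_mul, mul_sub, one_mul, mul_one, smul_mul_smul_comm, vecMulVec_mul_vecMulVec,
    vecMulVec_smul]
  linear_combination (norm := module) hss • vecMulVec u (star u)

end Unitary

section KroneckerPi

variable {κ l m o R : Type*} [Fintype κ]

def kroneckerPi [CommMonoid R] (A : κ → Matrix l m R) : Matrix (κ → l) (κ → m) R :=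
  of fun v w => ∏ n, A n (v n) (w n)

variable [DecidableEq κ] [CommSemiring R]

lemma trace_kroneckerPi [Fintype l] (A : κ → Matrix l l R) :
    trace (kroneckerPi A) = ∏ n, trace (A n) := by
  simp only [trace, diag, kroneckerPi, of_apply]
  exact (Fintype.prod_sum fun n b => A n b b).symm

lemma kroneckerPi_mul_kroneckerPi [Fintype m] (A : κ → Matrix l m R) (B : κ → Matrix m o R) :
    kroneckerPi A * kroneckerPi B = kroneckerPi fun n => A n * B n := by
  ext v w
  simp only [mul_apply, kroneckerPi, of_apply, ← Finset.prod_mul_distrib]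
  exact (Fintype.prod_sum fun n b => A n (v n) b * B n b (w n)).symm

end KroneckerPi

end Matrix

namespace HaarColumn

variable {ι : Type*} [DecidableEq ι]

lemma mulSingle_I_mul_conj (p q : ι) :
    (Pi.mulSingle p Complex.I : ι → ℂ) q * conj ((Pi.mulSingle p Complex.I : ι → ℂ) q) = 1 := by
  by_cases hq : q = p <;> simp [hq]

variable [Fintype ι]

@[fun_prop]
lemma continuous_entry (v c : ι) : Continuous fun U : unitaryGroup ι ℂ => U v c :=
  continuous_subtype_val.matrix_elem v c

lemma sum_entry_mul_conj (U : unitaryGroup ι ℂ) (c : ι) : ∑ p, U p c * conj (U p c) = 1 := by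
  have h := congrFun (congrFun (mem_unitaryGroup_iff'.mp U.2) c) c
  simp only [mul_apply, star_apply, one_apply_eq] at h
  rw [← h]
  exact Finset.sum_congr rfl fun p _ => mul_comm _ _

variable (μ : Measure (unitaryGroup ι ℂ)) (c : ι)

noncomputable def columnState (U : unitaryGroup ι ℂ) : Matrix ι ι ℂ :=
  vecMulVec ((U : Matrix ι ι ℂ).col c) (star ((U : Matrix ι ι ℂ).col c))

noncomputable def moment2 (v w : ι) : ℂ := ∫ U, U v c * conj (U w c) ∂μ

noncomputable def moment4 (v w x y : ι) : ℂ :=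
  ∫ U, U v c * conj (U w c) * (U x c * conj (U y c)) ∂μ

lemma moment4_swap_conj (v w x y : ι) : moment4 μ c v w x y = moment4 μ c v y x w := by
  simp only [moment4]; congr 1; ext U; ring

lemma moment4_swap_pairs (v w x y : ι) : moment4 μ c x y v w = moment4 μ c v w x y := by
  simp only [moment4]; congr 1; ext U; ring

section Linearity

variable [IsFiniteMeasure μ]

lemma integrable_of_continuous {f : unitaryGroup ι ℂ → ℂ} (hf : Continuous f) : Integrable f μ :=
  hf.integrable_of_hasCompactSupport (.of_compactSpace f)

lemma integral_sum_moment2 (K : ι → ι → ℂ) :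
    ∫ U, ∑ v, ∑ w, K v w * (U v c * conj (U w c)) ∂μ = ∑ v, ∑ w, K v w * moment2 μ c v w := by
  simp (disch := intros; exact integrable_of_continuous μ (by fun_prop)) only
    [integral_finsetSum, integral_const_mul, moment2]

lemma integral_sum_moment4 (K : ι → ι → ι → ι → ℂ) :
    ∫ U, ∑ v, ∑ w, ∑ x, ∑ y, K v w x y * (U v c * conj (U w c) * (U x c * conj (U y c))) ∂μ =
      ∑ v, ∑ w, ∑ x, ∑ y, K v w x y * moment4 μ c v w x y := by
  simp (disch := intros; exact integrable_of_continuous μ (by fun_prop)) only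
    [integral_finsetSum, integral_const_mul, moment4]

lemma sum_moment4 (v : ι) : ∑ x, moment4 μ c v v x x = moment2 μ c v v := by
  simp only [moment4, moment2]
  rw [← integral_finsetSum _ fun x _ => integrable_of_continuous μ (by fun_prop)]
  simp only [← Finset.mul_sum, sum_entry_mul_conj, mul_one]

end Linearity

section Invariance

variable [μ.IsMulLeftInvariant]

lemma integral_comp_mulVec_col (V : unitaryGroup ι ℂ) (F : (ι → ℂ) → ℂ) :
    ∫ U, F ((V : Matrix ι ι ℂ) *ᵥ (U : Matrix ι ι ℂ).col c) ∂μ =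
      ∫ U, F ((U : Matrix ι ι ℂ).col c) ∂μ := by
  have h (U : unitaryGroup ι ℂ) : ((V * U : unitaryGroup ι ℂ) : Matrix ι ι ℂ).col c =
      (V : Matrix ι ι ℂ) *ᵥ (U : Matrix ι ι ℂ).col c := by
    ext p; simp [mulVec, dotProduct, mul_apply]
  simpa only [h] using
    integral_mul_left_eq_self (fun U : unitaryGroup ι ℂ => F ((U : Matrix ι ι ℂ).col c)) V

lemma moment2_eq_phase_mul {θ : ι → ℂ} (hθ : ∀ p, θ p * conj (θ p) = 1) (v w : ι) :
    moment2 μ c v w = θ v * conj (θ w) * moment2 μ c v w := by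
  have h := integral_comp_mulVec_col μ c ⟨_, diagonal_mem_unitaryGroup hθ⟩
    fun ψ => ψ v * conj (ψ w)
  simp only [mulVec_diagonal, col_apply, map_mul] at h
  rw [moment2, ← integral_const_mul, ← h]
  congr 1; ext U; ring

lemma moment4_eq_phase_mul {θ : ι → ℂ} (hθ : ∀ p, θ p * conj (θ p) = 1) (v w x y : ι) :
    moment4 μ c v w x y = θ v * conj (θ w) * (θ x * conj (θ y)) * moment4 μ c v w x y := by
  have h := integral_comp_mulVec_col μ c ⟨_, diagonal_mem_unitaryGroup hθ⟩
    fun ψ => ψ v * conj (ψ w) * (ψ x * conj (ψ y))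
  simp only [mulVec_diagonal, col_apply, map_mul] at h
  rw [moment4, ← integral_const_mul, ← h]
  congr 1; ext U; ring

lemma moment2_perm (σ : Equiv.Perm ι) (v w : ι) :
    moment2 μ c (σ v) (σ w) = moment2 μ c v w := by
  simpa [moment2, permMatrix_mulVec] using
    integral_comp_mulVec_col μ c ⟨_, permMatrix_mem_unitaryGroup σ⟩ fun ψ => ψ v * conj (ψ w)

lemma moment4_perm (σ : Equiv.Perm ι) (v w x y : ι) :
    moment4 μ c (σ v) (σ w) (σ x) (σ y) = moment4 μ c v w x y := by
  simpa [moment4, permMatrix_mulVec] using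
    integral_comp_mulVec_col μ c ⟨_, permMatrix_mem_unitaryGroup σ⟩
      fun ψ => ψ v * conj (ψ w) * (ψ x * conj (ψ y))

lemma moment4_eq_sum [IsFiniteMeasure μ] (V : unitaryGroup ι ℂ) (v w x y : ι) :
    moment4 μ c v w x y =
      ∑ p, V v p * ∑ q, conj (V w q) * ∑ r, V x r * ∑ s, conj (V y s) * moment4 μ c p q r s := by
  have h := integral_comp_mulVec_col μ c V fun ψ => ψ v * conj (ψ w) * (ψ x * conj (ψ y))
  simp only [col_apply] at h
  simp only [Finset.mul_sum, ← mul_assoc]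
  rw [moment4, ← h, ← integral_sum_moment4]
  congr 1; ext U
  simp only [mulVec, dotProduct, col_apply, map_sum, map_mul, Finset.sum_mul_sum]
  refine Finset.sum_congr rfl fun p _ => Finset.sum_comm.trans <| Finset.sum_congr rfl fun q _ =>
    Finset.sum_congr rfl fun r _ => Finset.sum_congr rfl fun s _ => by ring

lemma moment2_eq_zero {v w : ι} (hvw : v ≠ w) : moment2 μ c v w = 0 :=
  eq_zero_of_mul_eq_self_left (by simp [hvw.symm, Complex.ext_iff])
    (moment2_eq_phase_mul μ c (mulSingle_I_mul_conj v) v w).symm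

/-- The phase `I` at the coordinate `p` multiplies the moment by `I ^ (a - b)`, where `a` and `b`
count `p` among `v, x` and among `w, y`; for unpaired indices some `p` makes this `≠ 1`. -/
lemma moment4_eq_zero {v w x y : ι} (h : ¬((v = w ∧ x = y) ∨ (v = y ∧ x = w))) :
    moment4 μ c v w x y = 0 := by
  obtain ⟨p, hp⟩ : ∃ p, let θ : ι → ℂ := Pi.mulSingle p Complex.I
      θ v * conj (θ w) * (θ x * conj (θ y)) ≠ 1 := by
    by_cases hw : v = w
    · subst hw
      have hxy : y ≠ x := fun h' => h (Or.inl ⟨rfl, h'.symm⟩)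
      refine ⟨x, ?_⟩
      by_cases hvx : v = x <;> simp [hxy, hvx, Complex.ext_iff]
    by_cases hy : v = y
    · subst hy
      have hxw : x ≠ w := fun h' => h (Or.inr ⟨rfl, h'⟩)
      exact ⟨w, by simp [hw, hxw, Complex.ext_iff]⟩
    · refine ⟨v, ?_⟩
      by_cases hx : x = v <;> norm_num [Ne.symm hw, Ne.symm hy, hx, Complex.ext_iff]
  exact eq_zero_of_mul_eq_self_left hp
    (moment4_eq_phase_mul μ c (mulSingle_I_mul_conj p) v w x y).symm

/-- Invariance under the reflection `H` in `e_v + 2 e_x`, whose `v`-th row is `(3/5, -4/5)` on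
`(v, x)`: among the 16 terms only the paired moments survive, giving
`A = (81 A + 256 A + 4 · 144 B) / 625` for `A = E|ψ_v|⁴`, `B = E|ψ_v|²|ψ_x|²`. -/
lemma moment4_self_eq_two_mul [IsFiniteMeasure μ] {v x : ι} (hvx : v ≠ x) :
    moment4 μ c v v v v = 2 * moment4 μ c v v x x := by
  set u : ι → ℂ := Pi.single v 1 + Pi.single x 2
  have hu : star u ⬝ᵥ u = 5 := by
    simp [u, dotProduct_add, hvx, hvx.symm]
    norm_num
  set H : unitaryGroup ι ℂ := ⟨_, householder_mem_unitaryGroup u⟩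
  have hentry (p : ι) : H v p = (if p = v then 3 / 5 else 0) + (if p = x then -4 / 5 else 0) := by
    simp only [H, householder, hu, Matrix.sub_apply, Matrix.smul_apply, vecMulVec_apply,
      smul_eq_mul]
    rcases eq_or_ne p v with rfl | hv
    · simp [u, hvx]; norm_num
    rcases eq_or_ne p x with rfl | hx
    · simp [u, hvx, hv]; norm_num
    · simp [u, hv, hx, hv.symm]
  have hconj (p : ι) : conj (H v p) = H v p := by
    rw [hentry]; split_ifs <;> simp [map_ofNat]
  have hrow (g : ι → ℂ) : ∑ p, H v p * g p = 3 / 5 * g v - 4 / 5 * g x := by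
    simp [hentry, add_mul, Finset.sum_add_distrib, ite_mul]; ring
  have h := moment4_eq_sum μ c H v v v v
  simp only [hconj, hrow] at h
  simp (disch := simp [hvx, hvx.symm]) only [moment4_eq_zero μ c] at h
  have hxxxx : moment4 μ c x x x x = moment4 μ c v v v v := by
    simpa using moment4_perm μ c (Equiv.swap v x) v v v v
  rw [moment4_swap_conj μ c v x x v, moment4_swap_conj μ c x v v x, moment4_swap_pairs μ c v v x x,
    hxxxx] at h
  linear_combination (625 / 288 : ℂ) * h

end Invariance

section Values

variable [μ.IsMulLeftInvariant] [IsProbabilityMeasure μ]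

lemma moment2_self (v : ι) : moment2 μ c v v = (Fintype.card ι : ℂ)⁻¹ := by
  have hsum : ∑ p, moment2 μ c p p = 1 := by
    simp only [moment2]
    rw [← integral_finsetSum _ fun p _ => integrable_of_continuous μ (by fun_prop)]
    simp [sum_entry_mul_conj]
  have hall (p : ι) : moment2 μ c p p = moment2 μ c v v := by
    simpa using moment2_perm μ c (Equiv.swap v p) v v
  rw [Finset.sum_congr rfl fun p _ => hall p, Finset.sum_const, Finset.card_univ,
    nsmul_eq_mul] at hsum
  exact eq_inv_of_mul_eq_one_right hsum

lemma moment2_eq (v w : ι) :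
    moment2 μ c v w = if v = w then (Fintype.card ι : ℂ)⁻¹ else 0 := by
  split_ifs with h
  · exact h ▸ moment2_self μ c v
  · exact moment2_eq_zero μ c h

/-- From `∑_y E|ψ_v|²|ψ_y|² = E|ψ_v|² = 1/d`, where the term `y = v` is twice each other one. -/
lemma moment4_pair {v x : ι} (hvx : v ≠ x) :
    moment4 μ c v v x x = 1 / ((Fintype.card ι : ℂ) * (Fintype.card ι + 1)) := by
  have : Nonempty ι := ⟨v⟩
  have hall (y : ι) (hy : y ∈ Finset.univ.erase v) :
      moment4 μ c v v y y = moment4 μ c v v x x := by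
    have hvy : v ≠ y := (Finset.ne_of_mem_erase hy).symm
    simpa [Equiv.swap_apply_of_ne_of_ne hvx hvy] using
      moment4_perm μ c (Equiv.swap x y) v v x x
  have hsum := sum_moment4 μ c v
  rw [moment2_self, ← Finset.add_sum_erase _ _ (Finset.mem_univ v),
    moment4_self_eq_two_mul μ c hvx, Finset.sum_congr rfl hall, Finset.sum_const,
    Finset.card_erase_of_mem (Finset.mem_univ v), Finset.card_univ, nsmul_eq_mul,
    Nat.cast_pred Fintype.card_pos] at hsum
  have hd : (Fintype.card ι : ℂ) ≠ 0 := Nat.cast_ne_zero.mpr Fintype.card_ne_zero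
  have hd1 : (Fintype.card ι : ℂ) + 1 ≠ 0 := Nat.cast_add_one_ne_zero _
  field_simp
  field_simp at hsum
  linear_combination hsum

lemma moment4_self [Nontrivial ι] (v : ι) :
    moment4 μ c v v v v = 2 / ((Fintype.card ι : ℂ) * (Fintype.card ι + 1)) := by
  obtain ⟨x, hx⟩ := exists_ne v
  rw [moment4_self_eq_two_mul μ c hx.symm, moment4_pair μ c hx.symm]
  ring

lemma moment4_eq [Nontrivial ι] (v w x y : ι) :
    moment4 μ c v w x y =
      ((if v = w ∧ x = y then 1 else 0) + (if v = y ∧ x = w then 1 else 0)) /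
        ((Fintype.card ι : ℂ) * (Fintype.card ι + 1)) := by
  by_cases h : (v = w ∧ x = y) ∨ (v = y ∧ x = w)
  · rcases h with ⟨rfl, rfl⟩ | ⟨rfl, rfl⟩ <;> rcases eq_or_ne v x with rfl | hvx
    · simp [moment4_self]; ring
    · simp [moment4_pair μ c hvx, hvx]
    · simp [moment4_self]; ring
    · simp [moment4_swap_conj μ c v x x v, moment4_pair μ c hvx, hvx]
  · rw [moment4_eq_zero μ c h, if_neg fun h' => h (Or.inl h'), if_neg fun h' => h (Or.inr h')]
    simp

lemma integral_trace_columnState_mul (A : Matrix ι ι ℂ) :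
    ∫ U, trace (columnState c U * A) ∂μ = trace A / Fintype.card ι := by
  simp only [columnState, trace_vecMulVec_star_mul, col_apply]
  rw [integral_sum_moment2]
  simp [moment2_eq, trace, div_eq_mul_inv, Finset.sum_mul]

lemma integral_trace_columnState_mul_mul_trace [Nontrivial ι] (A B : Matrix ι ι ℂ) :
    ∫ U, trace (columnState c U * A) * trace (columnState c U * B) ∂μ =
      (trace A * trace B + trace (A * B)) / ((Fintype.card ι : ℂ) * (Fintype.card ι + 1)) := by
  have hpt (U : unitaryGroup ι ℂ) :
      trace (columnState c U * A) * trace (columnState c U * B) =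
        ∑ v, ∑ w, ∑ x, ∑ y, A w v * B y x * (U v c * conj (U w c) * (U x c * conj (U y c))) := by
    simp only [columnState, trace_vecMulVec_star_mul, col_apply, Finset.sum_mul_sum]
    exact Finset.sum_congr rfl fun v _ => Finset.sum_comm.trans <| Finset.sum_congr rfl fun w _ =>
      Finset.sum_congr rfl fun x _ => Finset.sum_congr rfl fun y _ => by ring
  simp only [hpt, integral_sum_moment4, moment4_eq]
  simp only [ite_and, add_div, mul_add, Finset.sum_add_distrib, mul_div_assoc', ← Finset.sum_div,
    mul_ite, mul_one, mul_zero, Finset.sum_ite_irrel, Finset.sum_const_zero, Finset.sum_ite_eq,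
    Finset.sum_ite_eq', Finset.mem_univ, if_true, trace, diag, mul_apply, Finset.sum_mul_sum]
  exact congrArg₂ _ rfl (congrArg₂ _ Finset.sum_comm rfl)

end Values

end HaarColumn

lemma pauliString_eq_kroneckerPi (N : ℕ) (i : Fin N → Fin 4) :
    pauliString N i = kroneckerPi fun n => pauli (i n) := rfl

lemma trace_pauli (k : Fin 4) : trace (pauli k) = if k = 0 then 2 else 0 := by
  fin_cases k <;> simp [pauli, trace_fin_two]

lemma trace_pauli_mul_pauli (k l : Fin 4) : trace (pauli k * pauli l) = if k = l then 2 else 0 := by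
  fin_cases k <;> fin_cases l <;> simp [pauli, trace_fin_two] <;> norm_num

lemma trace_pauliString_eq_zero {N : ℕ} {i : Fin N → Fin 4} (hi : i ≠ fun _ => 0) :
    trace (pauliString N i) = 0 := by
  obtain ⟨n, hn⟩ := Function.ne_iff.mp hi
  rw [pauliString_eq_kroneckerPi, trace_kroneckerPi]
  exact Finset.prod_eq_zero (Finset.mem_univ n) (by rw [trace_pauli, if_neg hn])

lemma trace_pauliString_mul_pauliString (N : ℕ) (i j : Fin N → Fin 4) :
    trace (pauliString N i * pauliString N j) = if i = j then 2 ^ N else 0 := by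
  rw [pauliString_eq_kroneckerPi, pauliString_eq_kroneckerPi, kroneckerPi_mul_kroneckerPi,
    trace_kroneckerPi]
  split_ifs with h
  · simp [h, trace_pauli_mul_pauli]
  · obtain ⟨n, hn⟩ := Function.ne_iff.mp h
    exact Finset.prod_eq_zero (Finset.mem_univ n) (by rw [trace_pauli_mul_pauli, if_neg hn])

lemma haarPureState_eq_columnState (N : ℕ) (U : unitaryGroup (Fin N → Fin 2) ℂ) :
    haarPureState N U = HaarColumn.columnState 0 U := by
  have he : qubitE1 N = Pi.single 0 1 := funext fun v => by simp [qubitE1, Pi.single_apply, Pi.zero_def]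
  rw [haarPureState, HaarColumn.columnState, he, mul_vecMulVec, vecMulVec_mul, ← star_mulVec,
    mulVec_single_one]

theorem haar_pure_state_pauli_coeff_moments_general (N : ℕ)
    (μ : Measure (Matrix.unitaryGroup (Fin N → Fin 2) ℂ))
    [μ.IsHaarMeasure] [IsProbabilityMeasure μ]
    (i j : Fin N → Fin 4) (hi : i ≠ fun _ => 0) :
    (∫ U : Matrix.unitaryGroup (Fin N → Fin 2) ℂ,
        (haarPureState N U * pauliString N i).trace ∂μ) = 0
    ∧ (∫ U : Matrix.unitaryGroup (Fin N → Fin 2) ℂ,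
        (haarPureState N U * pauliString N i).trace *
          (haarPureState N U * pauliString N j).trace ∂μ)
      = (if i = j then 1 else 0) / ((2 : ℂ) ^ N + 1) := by
  -- `i ≠ 0` forces `N ≥ 1`, so `Fin N → Fin 2` is nontrivial.
  obtain ⟨n, -⟩ := Function.ne_iff.mp hi
  have : Nonempty (Fin N) := ⟨n⟩
  have hd : (Fintype.card (Fin N → Fin 2) : ℂ) = 2 ^ N := by simp
  simp only [haarPureState_eq_columnState]
  constructor
  · rw [HaarColumn.integral_trace_columnState_mul, trace_pauliString_eq_zero hi, zero_div]
  · rw [HaarColumn.integral_trace_columnState_mul_mul_trace, trace_pauliString_eq_zero hi, zero_mul,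
      zero_add, trace_pauliString_mul_pauliString, hd]
    split_ifs
    · field_simp
    · simp

/-- **Moments of Pauli coefficients of a Haar-random pure state.**
Let `N ≥ 1`, `μ` be the Haar probability measure on `U(2^N)`, and `ρ := U e₁e₁†U†`.
Then for all nonzero multi-indices `i, j ∈ {0,1,2,3}^N`:
`E[Tr[ρσ_i]] = 0` and `E[Tr[ρσ_i]·Tr[ρσ_j]] = δ_{ij}/(2^N + 1)`. -/
theorem haar_pure_state_pauli_coeff_moments (N : ℕ) (hN : 1 ≤ N)
    (μ : Measure (Matrix.unitaryGroup (Fin N → Fin 2) ℂ))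
    [μ.IsHaarMeasure] [IsProbabilityMeasure μ]
    (i j : Fin N → Fin 4) (hi : i ≠ fun _ => 0) (hj : j ≠ fun _ => 0) :
    (∫ U : Matrix.unitaryGroup (Fin N → Fin 2) ℂ,
        (haarPureState N U * pauliString N i).trace ∂μ) = 0
    ∧ (∫ U : Matrix.unitaryGroup (Fin N → Fin 2) ℂ,
        (haarPureState N U * pauliString N i).trace *
          (haarPureState N U * pauliString N j).trace ∂μ)
      = (if i = j then 1 else 0) / ((2 : ℂ) ^ N + 1) :=
  haar_pure_state_pauli_coeff_moments_general N μ i j hi
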